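/- arXiv:1910.03692 — 3 statements merged into one kernel-verified Lean document; each statement's English description precedes it below -/
import Mathlib

section
/- Let I ⊆ ℝ be measurable, and let h_n, h, m_n, m : I → [0,+∞] be measurable functions such that h(x) ≤ liminf_{n→∞} h_n(x) for a.e. x ∈ I and m_n ⇀ m weakly in L¹(I). Then ∫_I h(x) m(x) dx ≤ liminf_{n→∞} ∫_I h_n(x) m_n(x) dx. -/
/-!
The truncated tail infima `ψₖ = min (infᵢ h_{i+k}) k` are bounded and measurable, hence admissible
`L^∞` test functions, and `ψₖ ≤ hₙ` for `n ≥ k`. Weak convergence therefore gives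
`∫ ψₖ m = lim ∫ ψₖ mₙ ≤ liminf ∫ hₙ mₙ` for each `k`, and since `ψₖ` increases to
`liminf hₙ ≥ h`, monotone convergence finishes the proof.
-/

open MeasureTheory Filter Topology
open scoped ENNReal

namespace MeasureTheory

variable {α : Type*} [MeasurableSpace α] {μ : Measure α}

theorem ofReal_integral_le_lintegral_ofReal (f : α → ℝ) :
    ENNReal.ofReal (∫ x, f x ∂μ) ≤ ∫⁻ x, ENNReal.ofReal (f x) ∂μ := by
  by_cases hf : Integrable f μ
  · rw [integral_eq_lintegral_pos_part_sub_lintegral_neg_part hf]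
    exact (ENNReal.ofReal_le_ofReal (sub_le_self _ ENNReal.toReal_nonneg)).trans
      ENNReal.ofReal_toReal_le
  · simp [integral_undef hf]

-- Where `φ x = ∞` the left integrand is `0` (`ENNReal.toReal ∞ = 0`), so no finiteness is needed.
theorem ofReal_integral_mul_toReal_le_lintegral (f : α → ℝ) (φ : α → ℝ≥0∞) :
    ENNReal.ofReal (∫ x, f x * (φ x).toReal ∂μ) ≤ ∫⁻ x, φ x * ENNReal.ofReal (f x) ∂μ := by
  refine (ofReal_integral_le_lintegral_ofReal _).trans (lintegral_mono fun x => ?_)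
  rw [ENNReal.ofReal_mul' ENNReal.toReal_nonneg, mul_comm]
  exact mul_le_mul_left ENNReal.ofReal_toReal_le _

theorem memLp_top_toReal_of_le {φ : α → ℝ≥0∞} (hφ : Measurable φ) {C : ℝ≥0∞} (hC : C ≠ ∞)
    (hφC : ∀ x, φ x ≤ C) : MemLp (fun x => (φ x).toReal) ∞ μ :=
  memLp_top_of_bound hφ.ennreal_toReal.aestronglyMeasurable C.toReal <| ae_of_all _ fun x => by
    rw [Real.norm_of_nonneg ENNReal.toReal_nonneg]
    exact ENNReal.toReal_mono hC (hφC x)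

theorem lintegral_mul_ofReal_eq_ofReal_integral {f : α → ℝ} (hf : Integrable f μ)
    (hf_nonneg : 0 ≤ᵐ[μ] f) {φ : α → ℝ≥0∞} (hφ_mem : MemLp (fun x => (φ x).toReal) ∞ μ)
    (hφ_ne_top : ∀ᵐ x ∂μ, φ x ≠ ∞) :
    ∫⁻ x, φ x * ENNReal.ofReal (f x) ∂μ = ENNReal.ofReal (∫ x, f x * (φ x).toReal ∂μ) := by
  have hint : Integrable (fun x => f x * (φ x).toReal) μ := hf.mul_of_top_left hφ_mem
  rw [ofReal_integral_eq_lintegral_ofReal hint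
    (hf_nonneg.mono fun x hx => mul_nonneg hx ENNReal.toReal_nonneg)]
  refine lintegral_congr_ae (hφ_ne_top.mono fun x hx => ?_)
  dsimp only
  rw [ENNReal.ofReal_mul' ENNReal.toReal_nonneg, ENNReal.ofReal_toReal hx, mul_comm]

theorem lintegral_mul_ofReal_le_liminf_of_weakL1 {f : α → ℝ} (hf : Integrable f μ)
    (hf_nonneg : 0 ≤ᵐ[μ] f) {fn : ℕ → α → ℝ}
    (hweak : ∀ g : α → ℝ, MemLp g ∞ μ →
      Tendsto (fun n => ∫ x, fn n x * g x ∂μ) atTop (𝓝 (∫ x, f x * g x ∂μ)))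
    {φ : α → ℝ≥0∞} (hφ : Measurable φ) {C : ℝ≥0∞} (hC : C ≠ ∞) (hφC : ∀ x, φ x ≤ C)
    {u : ℕ → α → ℝ≥0∞} (hφu : ∀ᶠ n in atTop, ∀ x, φ x ≤ u n x) :
    ∫⁻ x, φ x * ENNReal.ofReal (f x) ∂μ ≤
      liminf (fun n => ∫⁻ x, u n x * ENNReal.ofReal (fn n x) ∂μ) atTop := by
  have hφ_mem : MemLp (fun x => (φ x).toReal) ∞ μ := memLp_top_toReal_of_le hφ hC hφC
  have hφ_ne_top : ∀ᵐ x ∂μ, φ x ≠ ∞ := ae_of_all _ fun x => ((hφC x).trans_lt hC.lt_top).ne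
  have hlim := (ENNReal.continuous_ofReal.tendsto _).comp (hweak _ hφ_mem)
  rw [lintegral_mul_ofReal_eq_ofReal_integral hf hf_nonneg hφ_mem hφ_ne_top, ← hlim.liminf_eq]
  refine liminf_le_liminf (hφu.mono fun n hn => ?_)
  exact (ofReal_integral_mul_toReal_le_lintegral _ _).trans
    (lintegral_mono fun x => mul_le_mul_left (hn x) _)

end MeasureTheory

theorem monotone_iInf_add {β : Type*} [CompleteLattice β] (u : ℕ → β) :
    Monotone fun k => ⨅ i, u (i + k) := fun k l hkl =>
  le_iInf fun i => iInf_le_of_le (i + (l - k)) (by rw [Nat.add_assoc, Nat.sub_add_cancel hkl])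

noncomputable def truncTailInf (u : ℕ → ℝ≥0∞) (k : ℕ) : ℝ≥0∞ := (⨅ i, u (i + k)) ⊓ k

theorem truncTailInf_le_natCast (u : ℕ → ℝ≥0∞) (k : ℕ) : truncTailInf u k ≤ k :=
  inf_le_right

theorem truncTailInf_le_of_le (u : ℕ → ℝ≥0∞) {k n : ℕ} (hkn : k ≤ n) : truncTailInf u k ≤ u n :=
  inf_le_left.trans (iInf_le_of_le (n - k) (by rw [Nat.sub_add_cancel hkn]))

theorem monotone_truncTailInf (u : ℕ → ℝ≥0∞) : Monotone (truncTailInf u) :=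
  fun _ _ hkl => inf_le_inf (monotone_iInf_add u hkl) (Nat.mono_cast hkl)

theorem iSup_truncTailInf (u : ℕ → ℝ≥0∞) : ⨆ k, truncTailInf u k = liminf u atTop := by
  simp only [truncTailInf]
  rw [iSup_inf_of_monotone (monotone_iInf_add u) Nat.mono_cast, ENNReal.iSup_natCast, inf_top_eq,
    liminf_eq_iSup_iInf_of_nat']

theorem lsc_product_weakL1_general
    (I : Set ℝ)
    (h : ℝ → ℝ≥0∞) (hn : ℕ → ℝ → ℝ≥0∞)
    (m : ℝ → ℝ) (mn : ℕ → ℝ → ℝ)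
    (hnmeas : ∀ n, Measurable (hn n))
    (hm_int : IntegrableOn m I)
    (hm_nonneg : ∀ᵐ x ∂(volume.restrict I), 0 ≤ m x)
    (hliminf : ∀ᵐ x ∂(volume.restrict I),
      h x ≤ liminf (fun n => hn n x) atTop)
    (hweak : ∀ g : ℝ → ℝ, MemLp g ⊤ (volume.restrict I) →
      Tendsto (fun n => ∫ x, mn n x * g x ∂(volume.restrict I)) atTop
        (𝓝 (∫ x, m x * g x ∂(volume.restrict I)))) :
    ∫⁻ x, h x * ENNReal.ofReal (m x) ∂(volume.restrict I) ≤
      liminf (fun n => ∫⁻ x, hn n x * ENNReal.ofReal (mn n x) ∂(volume.restrict I))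
        atTop := by
  set ψ : ℕ → ℝ → ℝ≥0∞ := fun k x => truncTailInf (fun n => hn n x) k
  have hψ_meas : ∀ k, Measurable (ψ k) := fun k =>
    (Measurable.iInf fun i => hnmeas (i + k)).inf measurable_const
  have hψ_le : ∀ k, ∫⁻ x, ψ k x * ENNReal.ofReal (m x) ∂(volume.restrict I) ≤
      liminf (fun n => ∫⁻ x, hn n x * ENNReal.ofReal (mn n x) ∂(volume.restrict I)) atTop :=
    fun k => lintegral_mul_ofReal_le_liminf_of_weakL1 hm_int hm_nonneg hweak (hψ_meas k)
      (ENNReal.natCast_ne_top k) (fun x => truncTailInf_le_natCast _ k)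
      ((eventually_ge_atTop k).mono fun n hkn x => truncTailInf_le_of_le _ hkn)
  calc ∫⁻ x, h x * ENNReal.ofReal (m x) ∂(volume.restrict I)
      ≤ ∫⁻ x, (⨆ k, ψ k x) * ENNReal.ofReal (m x) ∂(volume.restrict I) :=
        lintegral_mono_ae <| hliminf.mono fun x hx =>
          mul_le_mul_left (hx.trans_eq (iSup_truncTailInf _).symm) _
    _ = ⨆ k, ∫⁻ x, ψ k x * ENNReal.ofReal (m x) ∂(volume.restrict I) := by
        simp_rw [ENNReal.iSup_mul]
        refine lintegral_iSup' (fun k => (hψ_meas k).aemeasurable.mul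
          hm_int.aemeasurable.ennreal_ofReal) (ae_of_all _ fun x k l hkl => ?_)
        exact mul_le_mul_left (monotone_truncTailInf _ hkl) _
    _ ≤ _ := iSup_le hψ_le

/-- Lower semicontinuity of products (Lemma B.1): if `h ≤ liminf hₙ` a.e. on a
measurable set `I ⊆ ℝ` and `mₙ ⇀ m` weakly in `L¹(I)` (i.e. tested against all
`L^∞` functions), then `∫_I h m ≤ liminf ∫_I hₙ mₙ`. -/
theorem lsc_product_weakL1
    (I : Set ℝ) (hI : MeasurableSet I)
    (h : ℝ → ℝ≥0∞) (hn : ℕ → ℝ → ℝ≥0∞)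
    (m : ℝ → ℝ) (mn : ℕ → ℝ → ℝ)
    (hmeas : Measurable h) (hnmeas : ∀ n, Measurable (hn n))
    (hm_int : IntegrableOn m I) (hmn_int : ∀ n, IntegrableOn (mn n) I)
    (hm_nonneg : ∀ᵐ x ∂(volume.restrict I), 0 ≤ m x)
    (hmn_nonneg : ∀ n, ∀ᵐ x ∂(volume.restrict I), 0 ≤ mn n x)
    (hliminf : ∀ᵐ x ∂(volume.restrict I),
      h x ≤ liminf (fun n => hn n x) atTop)
    (hweak : ∀ g : ℝ → ℝ, MemLp g ⊤ (volume.restrict I) →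
      Tendsto (fun n => ∫ x, mn n x * g x ∂(volume.restrict I)) atTop
        (𝓝 (∫ x, m x * g x ∂(volume.restrict I)))) :
    ∫⁻ x, h x * ENNReal.ofReal (m x) ∂(volume.restrict I) ≤
      liminf (fun n => ∫⁻ x, hn n x * ENNReal.ofReal (mn n x) ∂(volume.restrict I))
        atTop :=
  lsc_product_weakL1_general I h hn m mn hnmeas hm_int hm_nonneg hliminf hweak
end

section
/- Let X = Y* for a separable Banach space Y, let I = [a,b] ⊂ ℝ, let f : X → [0,+∞] be sequentially weak* lower semicontinuous, and let v_k : I → X satisfy: (i) there is C > 0 with ‖v_k(t) − v_k(s)‖_X ≤ C|t − s| for all t,s ∈ I and all k, and (ii) v_k(t) ⇀* v(t) in X for every t ∈ I. Then for every compact set K contained in {t ∈ I : f(v(t)) > 0} there exist c > 0 and k̄ ∈ ℕ such that f(v_k(t)) ≥ c for every k ≥ k̄ and every t ∈ K. -/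
open Filter Topology
open scoped ENNReal

/-! If the bound failed, there would be points `t n ∈ K` and indices `k n → ∞` with
`f (v (k n) (t n)) → 0`; after passing to a subsequence, `t n → t₀ ∈ K`. The uniform Lipschitz
bound transfers the weak* convergence `v k t₀ ⇀* v t₀` to the diagonal sequence
`v (k n) (t n)`, so lower semicontinuity forces `f (v t₀) = 0`, contradicting `t₀ ∈ K`. -/

section

variable {𝕜 E F T ι : Type*} [NontriviallyNormedField 𝕜]
  [SeminormedAddCommGroup E] [NormedSpace 𝕜 E] [SeminormedAddCommGroup F] [NormedSpace 𝕜 F]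
  [PseudoMetricSpace T]

theorem tendsto_apply_of_equiLipschitz {S : Set T} {v : ℕ → T → E →L[𝕜] F}
    {w : E →L[𝕜] F} {C : ℝ} (hlip : ∀ k, ∀ t ∈ S, ∀ s ∈ S, ‖v k t - v k s‖ ≤ C * dist t s)
    {t₀ : T} (ht₀ : t₀ ∈ S) (hconv : ∀ y, Tendsto (fun k => v k t₀ y) atTop (𝓝 (w y)))
    {l : Filter ι} {k : ι → ℕ} (hk : Tendsto k l atTop) {t : ι → T} (htS : ∀ᶠ n in l, t n ∈ S)
    (ht : Tendsto t l (𝓝 t₀)) (y : E) :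
    Tendsto (fun n => v (k n) (t n) y) l (𝓝 (w y)) := by
  rw [tendsto_iff_dist_tendsto_zero]
  have hbound : ∀ᶠ n in l, dist (v (k n) (t n) y) (w y)
      ≤ C * dist (t n) t₀ * ‖y‖ + dist (v (k n) t₀ y) (w y) := by
    filter_upwards [htS] with n hn
    calc dist (v (k n) (t n) y) (w y)
        ≤ ‖(v (k n) (t n) - v (k n) t₀) y‖ + dist (v (k n) t₀ y) (w y) := by
          rw [sub_apply, ← dist_eq_norm]
          exact dist_triangle _ _ _
      _ ≤ C * dist (t n) t₀ * ‖y‖ + dist (v (k n) t₀ y) (w y) := by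
          gcongr
          exact (ContinuousLinearMap.le_opNorm _ _).trans
            (mul_le_mul_of_nonneg_right (hlip _ _ hn _ ht₀) (norm_nonneg y))
  have hdist : Tendsto (fun n => dist (t n) t₀) l (𝓝 0) := tendsto_iff_dist_tendsto_zero.1 ht
  have hlim : Tendsto (fun n => C * dist (t n) t₀ * ‖y‖ + dist (v (k n) t₀ y) (w y)) l (𝓝 0) := by
    simpa using ((hdist.const_mul C).mul_const ‖y‖).add
      ((tendsto_iff_dist_tendsto_zero.1 (hconv y)).comp hk)
  exact squeeze_zero' (.of_forall fun _ => dist_nonneg) hbound hlim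

end

theorem IsCompact.exists_pos_eventually_le_of_liminf_pos {T : Type*} [TopologicalSpace T]
    [FirstCountableTopology T] {K : Set T} (hK : IsCompact K) (g : ℕ → T → ℝ≥0∞)
    (hg : ∀ t₀ ∈ K, ∀ (k : ℕ → ℕ) (t : ℕ → T), Tendsto k atTop atTop → (∀ n, t n ∈ K) →
      Tendsto t atTop (𝓝 t₀) → 0 < liminf (fun n => g (k n) (t n)) atTop) :
    ∃ c : ℝ≥0∞, 0 < c ∧ ∃ N : ℕ, ∀ k ≥ N, ∀ t ∈ K, c ≤ g k t := by
  by_contra! h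
  choose k hk t htK hgt using fun n : ℕ => h (n : ℝ≥0∞)⁻¹ (by simp) n
  obtain ⟨t₀, ht₀, φ, hφ, hφlim⟩ := hK.tendsto_subseq htK
  have hkφ : Tendsto (k ∘ φ) atTop atTop :=
    tendsto_atTop_mono (fun n => hφ.le_apply.trans (hk (φ n))) tendsto_id
  have hpos := hg t₀ ht₀ (k ∘ φ) (t ∘ φ) hkφ (fun n => htK (φ n)) hφlim
  have hzero : liminf (fun n => g (k (φ n)) (t (φ n))) atTop ≤ 0 :=
    calc liminf (fun n => g (k (φ n)) (t (φ n))) atTop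
        ≤ liminf (fun n => ((φ n : ℕ) : ℝ≥0∞)⁻¹) atTop :=
          liminf_le_liminf (.of_forall fun n => (hgt (φ n)).le)
      _ = 0 := (ENNReal.tendsto_inv_nat_nhds_zero.comp hφ.tendsto_atTop).liminf_eq
  exact hpos.not_ge hzero

theorem uniform_lower_bound_weakstar_general
    {Y : Type*} [NormedAddCommGroup Y] [NormedSpace ℝ Y]
    (a b : ℝ)
    (f : (Y →L[ℝ] ℝ) → ℝ≥0∞)
    (hf : ∀ (w : ℕ → Y →L[ℝ] ℝ) (x : Y →L[ℝ] ℝ),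
      (∀ y : Y, Tendsto (fun k => w k y) atTop (𝓝 (x y))) →
      f x ≤ liminf (fun k => f (w k)) atTop)
    (C : ℝ)
    (v : ℕ → ℝ → (Y →L[ℝ] ℝ)) (vlim : ℝ → (Y →L[ℝ] ℝ))
    (hlip : ∀ k, ∀ t ∈ Set.Icc a b, ∀ s ∈ Set.Icc a b,
      ‖v k t - v k s‖ ≤ C * |t - s|)
    (hconv : ∀ t ∈ Set.Icc a b, ∀ y : Y,
      Tendsto (fun k => v k t y) atTop (𝓝 (vlim t y)))
    (K : Set ℝ) (hK : IsCompact K)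
    (hKsub : K ⊆ {t ∈ Set.Icc a b | 0 < f (vlim t)}) :
    ∃ c : ℝ≥0∞, 0 < c ∧ ∃ N : ℕ, ∀ k ≥ N, ∀ t ∈ K, c ≤ f (v k t) := by
  refine hK.exists_pos_eventually_le_of_liminf_pos (fun k t => f (v k t))
    fun t₀ ht₀ k t hk htK ht => ?_
  obtain ⟨ht₀I, hpos⟩ := hKsub ht₀
  have hlip' : ∀ k, ∀ t ∈ Set.Icc a b, ∀ s ∈ Set.Icc a b, ‖v k t - v k s‖ ≤ C * dist t s := by
    simpa only [Real.dist_eq] using hlip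
  exact hpos.trans_le <| hf _ _ <| tendsto_apply_of_equiLipschitz hlip' ht₀I (hconv t₀ ht₀I) hk
    (.of_forall fun n => (hKsub (htK n)).1) ht

/-- Lemma B.2: `X = Y*` for a separable Banach space `Y`, `f : X → [0,+∞]`
sequentially weak* lower semicontinuous, and `v_k : [a,b] → X` uniformly
Lipschitz and pointwise weak* convergent to `v`. Then on every compact subset
`K` of the positivity set `{t ∈ [a,b] : f(v(t)) > 0}` there are `c > 0` and
`k̄` with `f(v_k(t)) ≥ c` for all `k ≥ k̄` and `t ∈ K`. -/
theorem uniform_lower_bound_weakstar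
    {Y : Type*} [NormedAddCommGroup Y] [NormedSpace ℝ Y] [CompleteSpace Y]
    [TopologicalSpace.SeparableSpace Y]
    (a b : ℝ) (hab : a ≤ b)
    (f : (Y →L[ℝ] ℝ) → ℝ≥0∞)
    (hf : ∀ (w : ℕ → Y →L[ℝ] ℝ) (x : Y →L[ℝ] ℝ),
      (∀ y : Y, Tendsto (fun k => w k y) atTop (𝓝 (x y))) →
      f x ≤ liminf (fun k => f (w k)) atTop)
    (C : ℝ) (hC : 0 < C)
    (v : ℕ → ℝ → (Y →L[ℝ] ℝ)) (vlim : ℝ → (Y →L[ℝ] ℝ))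
    (hlip : ∀ k, ∀ t ∈ Set.Icc a b, ∀ s ∈ Set.Icc a b,
      ‖v k t - v k s‖ ≤ C * |t - s|)
    (hconv : ∀ t ∈ Set.Icc a b, ∀ y : Y,
      Tendsto (fun k => v k t y) atTop (𝓝 (vlim t y)))
    (K : Set ℝ) (hK : IsCompact K)
    (hKsub : K ⊆ {t ∈ Set.Icc a b | 0 < f (vlim t)}) :
    ∃ c : ℝ≥0∞, 0 < c ∧ ∃ N : ℕ, ∀ k ≥ N, ∀ t ∈ K, c ≤ f (v k t) :=
  uniform_lower_bound_weakstar_general a b f hf C v vlim hlip hconv K hK hKsub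
end

section
/- Let ℳ(t,q,t',q') be the vanishing-viscosity contact potential defined by ℳ = ℛ(z') + ℋ(z,p') + ℳ^{red}, where for t' > 0, ℳ^{red}(t,q,t',q') = 0 if −D_u E(t,q)=0, −D_z E(t,q) ∈ ∂ℛ(0), and −D_p E(t,q) ∈ ∂_π ℋ(z,0), and ℳ^{red} = +∞ otherwise; and for t' = 0, ℳ^{red}(t,q,0,q') = 𝒟_ν(q')·𝒟*_ν(t,q). Then along any absolutely continuous parameterized curve (t,q) : [0,S] → [0,T]×Q with ℳ(t,q,t',q') < ∞ a.e., the chain-rule inequality holds: −(d/ds)E(t(s),q(s)) + ∂_t E(t(s),q(s)) t'(s) = ⟨−D_q E(t(s),q(s)), q'(s)⟩ ≤ ℳ(t(s),q(s),t'(s),q'(s)) for a.e. s. -/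
open MeasureTheory Filter
open scoped RealInnerProductSpace ENNReal Classical

/-- The viscous-norm functional `𝒟_ν(q')² = ν‖u'‖² + ‖z'‖² + ν‖p'‖²`. -/
noncomputable def vvD {U Z P : Type*} [NormedAddCommGroup U] [NormedAddCommGroup Z]
    [NormedAddCommGroup P] (ν : ℝ) (u' : U) (z' : Z) (p' : P) : ℝ :=
  Real.sqrt (ν * ‖u'‖ ^ 2 + ‖z'‖ ^ 2 + ν * ‖p'‖ ^ 2)

/-- The dual functional
`𝒟*_ν(t,q)² = ν⁻¹‖−D_uE‖² + dist(−D_zE, ∂ℛ(0))² + ν⁻¹ dist(−D_pE, ∂_πℋ(z,0))²`,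
written in terms of the (given) partial gradients `ξu, ξz, ξp` of the energy. -/
noncomputable def vvDstar {U Z P : Type*} [NormedAddCommGroup U] [InnerProductSpace ℝ U]
    [NormedAddCommGroup Z] [InnerProductSpace ℝ Z]
    [NormedAddCommGroup P] [InnerProductSpace ℝ P]
    (ν : ℝ) (R : Z → ℝ) (Hh : Z → P → ℝ) (z : Z) (ξu : U) (ξz : Z) (ξp : P) : ℝ :=
  Real.sqrt (ν⁻¹ * ‖ξu‖ ^ 2
    + Metric.infDist (-ξz) {γ : Z | ∀ w, ⟪γ, w⟫ ≤ R w} ^ 2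
    + ν⁻¹ * Metric.infDist (-ξp) {ρ : P | ∀ w, ⟪ρ, w⟫ ≤ Hh z w} ^ 2)

/-- The reduced vanishing-viscosity contact potential `ℳ^{red}`: for `t' > 0` it
is `0` on the set of (locally) stable states and `+∞` otherwise; for `t' = 0`
it equals `𝒟_ν(q')·𝒟*_ν(t,q)`. -/
noncomputable def vvMred {U Z P : Type*} [NormedAddCommGroup U] [InnerProductSpace ℝ U]
    [NormedAddCommGroup Z] [InnerProductSpace ℝ Z]
    [NormedAddCommGroup P] [InnerProductSpace ℝ P]
    (ν : ℝ) (R : Z → ℝ) (Hh : Z → P → ℝ) (z : Z)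
    (t' : ℝ) (u' : U) (z' : Z) (p' : P) (ξu : U) (ξz : Z) (ξp : P) : ℝ≥0∞ :=
  if 0 < t' then
    (if ξu = 0 ∧ (∀ w, ⟪-ξz, w⟫ ≤ R w) ∧ (∀ w, ⟪-ξp, w⟫ ≤ Hh z w) then 0 else ⊤)
  else ENNReal.ofReal (vvD ν u' z' p' * vvDstar ν R Hh z ξu ξz ξp)

/-- The full vanishing-viscosity contact potential
`ℳ = ℛ(z') + ℋ(z,p') + ℳ^{red}`. -/
noncomputable def vvM {U Z P : Type*} [NormedAddCommGroup U] [InnerProductSpace ℝ U]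
    [NormedAddCommGroup Z] [InnerProductSpace ℝ Z]
    [NormedAddCommGroup P] [InnerProductSpace ℝ P]
    (ν : ℝ) (R : Z → ℝ) (Hh : Z → P → ℝ) (z : Z)
    (t' : ℝ) (u' : U) (z' : Z) (p' : P) (ξu : U) (ξz : Z) (ξp : P) : ℝ≥0∞ :=
  ENNReal.ofReal (R z') + ENNReal.ofReal (Hh z p')
    + vvMred ν R Hh z t' u' z' p' ξu ξz ξp


/-! If `ℳ` is finite and `t' > 0`, the state is stable: `D_uE = 0` and `−D_zE`, `−D_pE` lie in
the subdifferentials at `0`, so `⟨−D_qE, q'⟩ ≤ ℛ(z') + ℋ(z,p')` at once. Otherwise write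
`−D_zE = (−D_zE − γ) + γ` with `γ ∈ ∂ℛ(0)` (likewise for `p`): `⟨γ, z'⟩ ≤ ℛ(z')`, and the
remainder is bounded by `dist · ‖z'‖`; a `ν`-weighted Cauchy–Schwarz inequality then bounds
`‖D_uE‖‖u'‖ + d_z‖z'‖ + d_p‖p'‖` by `𝒟_ν(q') 𝒟*_ν(t,q)`. -/

theorem real_inner_le_infDist_mul_norm_add {E : Type*} [NormedAddCommGroup E]
    [InnerProductSpace ℝ E] {K : Set E} (hK : K.Nonempty) {x w : E} {r : ℝ}
    (hKr : ∀ γ ∈ K, ⟪γ, w⟫ ≤ r) :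
    ⟪x, w⟫ ≤ Metric.infDist x K * ‖w‖ + r := by
  obtain ⟨γ₀, hγ₀⟩ := hK
  rcases eq_or_ne w 0 with rfl | hw
  · simpa using hKr γ₀ hγ₀
  have hw : 0 < ‖w‖ := norm_pos_iff.mpr hw
  have hdist : (⟪x, w⟫ - r) / ‖w‖ ≤ Metric.infDist x K := by
    refine (Metric.le_infDist ⟨γ₀, hγ₀⟩).mpr fun γ hγ => ?_
    rw [div_le_iff₀ hw, dist_eq_norm]
    have hsplit : ⟪x, w⟫ = ⟪x - γ, w⟫ + ⟪γ, w⟫ := by rw [inner_sub_left]; ring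
    linarith [real_inner_le_norm (x - γ) w, hKr γ hγ]
  linarith [(div_le_iff₀ hw).mp hdist]

theorem mul_add_mul_add_mul_le_sqrt_mul_sqrt {ν : ℝ} (hν : 0 < ν) (a₁ a₂ a₃ b₁ b₂ b₃ : ℝ) :
    a₁ * b₁ + a₂ * b₂ + a₃ * b₃
      ≤ √(ν⁻¹ * a₁ ^ 2 + a₂ ^ 2 + ν⁻¹ * a₃ ^ 2) * √(ν * b₁ ^ 2 + b₂ ^ 2 + ν * b₃ ^ 2) := by
  have hsqrt : √ν⁻¹ * √ν = 1 := by
    rw [← Real.sqrt_mul (by positivity), inv_mul_cancel₀ hν.ne', Real.sqrt_one]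
  calc a₁ * b₁ + a₂ * b₂ + a₃ * b₃
      = √ν⁻¹ * a₁ * (√ν * b₁) + a₂ * b₂ + √ν⁻¹ * a₃ * (√ν * b₃) := by
        linear_combination (-(a₁ * b₁) - a₃ * b₃) * hsqrt
    _ ≤ _ := by
        simpa [Fin.sum_univ_three, mul_pow, Real.sq_sqrt, hν.le] using
          Real.sum_mul_le_sqrt_mul_sqrt Finset.univ ![√ν⁻¹ * a₁, a₂, √ν⁻¹ * a₃]
            ![√ν * b₁, b₂, √ν * b₃]

section ContactPotential

variable {U Z P : Type*} [NormedAddCommGroup U] [InnerProductSpace ℝ U]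
  [NormedAddCommGroup Z] [InnerProductSpace ℝ Z] [NormedAddCommGroup P] [InnerProductSpace ℝ P]

theorem real_inner_le_infDist_subdifferential_mul_norm_add {R : Z → ℝ} (hR : ∀ w, 0 ≤ R w)
    (x w : Z) : ⟪x, w⟫ ≤ Metric.infDist x {γ : Z | ∀ v, ⟪γ, v⟫ ≤ R v} * ‖w‖ + R w :=
  real_inner_le_infDist_mul_norm_add ⟨0, fun v => by simpa using hR v⟩ fun _ hγ => hγ w

theorem neg_inner_le_of_stable {R : Z → ℝ} {H : P → ℝ} {ξu u' : U} {ξz z' : Z} {ξp p' : P}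
    (hu : ξu = 0) (hz : ∀ w, ⟪-ξz, w⟫ ≤ R w) (hp : ∀ w, ⟪-ξp, w⟫ ≤ H w) :
    -(⟪ξu, u'⟫ + ⟪ξz, z'⟫ + ⟪ξp, p'⟫) ≤ R z' + H p' := by
  have hz' := hz z'
  have hp' := hp p'
  rw [inner_neg_left] at hz' hp'
  simp only [hu, inner_zero_left]
  linarith

theorem neg_inner_le_add_vvD_mul_vvDstar {ν : ℝ} (hν : 0 < ν) {R : Z → ℝ} {Hh : Z → P → ℝ}
    {z : Z} (hR : ∀ w, 0 ≤ R w) (hH : ∀ w, 0 ≤ Hh z w) (ξu u' : U) (ξz z' : Z) (ξp p' : P) :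
    -(⟪ξu, u'⟫ + ⟪ξz, z'⟫ + ⟪ξp, p'⟫)
      ≤ R z' + Hh z p' + vvD ν u' z' p' * vvDstar ν R Hh z ξu ξz ξp := by
  have hu := real_inner_le_norm (-ξu) u'
  have hz := real_inner_le_infDist_subdifferential_mul_norm_add hR (-ξz) z'
  have hp := real_inner_le_infDist_subdifferential_mul_norm_add hH (-ξp) p'
  have hcs := mul_add_mul_add_mul_le_sqrt_mul_sqrt hν ‖-ξu‖
    (Metric.infDist (-ξz) {γ : Z | ∀ w, ⟪γ, w⟫ ≤ R w})
    (Metric.infDist (-ξp) {ρ : P | ∀ w, ⟪ρ, w⟫ ≤ Hh z w}) ‖u'‖ ‖z'‖ ‖p'‖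
  rw [norm_neg] at hcs hu
  rw [inner_neg_left] at hu hz hp
  rw [vvD, vvDstar, mul_comm]
  linarith

theorem ofReal_neg_inner_le_vvM {ν : ℝ} (hν : 0 < ν) {R : Z → ℝ} {Hh : Z → P → ℝ} {z : Z}
    (hR : ∀ w, 0 ≤ R w) (hH : ∀ w, 0 ≤ Hh z w) {τ : ℝ} {ξu u' : U} {ξz z' : Z} {ξp p' : P}
    (hfin : vvM ν R Hh z τ u' z' p' ξu ξz ξp < ⊤) :
    ENNReal.ofReal (-(⟪ξu, u'⟫ + ⟪ξz, z'⟫ + ⟪ξp, p'⟫)) ≤ vvM ν R Hh z τ u' z' p' ξu ξz ξp := by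
  by_cases hτ : 0 < τ
  · have hstable : ξu = 0 ∧ (∀ w, ⟪-ξz, w⟫ ≤ R w) ∧ (∀ w, ⟪-ξp, w⟫ ≤ Hh z w) := by
      by_contra hunstable
      simp only [vvM, vvMred, if_pos hτ, if_neg hunstable] at hfin
      simp at hfin
    simp only [vvM, vvMred, if_pos hτ, if_pos hstable, add_zero]
    rw [← ENNReal.ofReal_add (hR _) (hH _)]
    obtain ⟨hu, hz, hp⟩ := hstable
    exact ENNReal.ofReal_le_ofReal (neg_inner_le_of_stable hu hz hp)
  · simp only [vvM, vvMred, if_neg hτ]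
    rw [← ENNReal.ofReal_add (hR _) (hH _),
      ← ENNReal.ofReal_add (add_nonneg (hR _) (hH _)) (by unfold vvD vvDstar; positivity)]
    exact ENNReal.ofReal_le_ofReal (neg_inner_le_add_vvD_mul_vvDstar hν hR hH _ _ _ _ _ _)

end ContactPotential

theorem chain_rule_inequality_for_contact_potential_general
    {U Z P : Type*}
    [NormedAddCommGroup U] [InnerProductSpace ℝ U]
    [NormedAddCommGroup Z] [InnerProductSpace ℝ Z]
    [NormedAddCommGroup P] [InnerProductSpace ℝ P]
    (ν : ℝ) (hν : 0 < ν)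
    (E : ℝ → U → Z → P → ℝ)
    (DuE : ℝ → U → Z → P → U) (DzE : ℝ → U → Z → P → Z)
    (DpE : ℝ → U → Z → P → P) (dtE : ℝ → U → Z → P → ℝ)
    (R : Z → ℝ) (Hh : Z → P → ℝ)
    (hRnn : ∀ w, 0 ≤ R w)
    (hHnn : ∀ z w, 0 ≤ Hh z w)
    (S : ℝ)
    (t : ℝ → ℝ) (u : ℝ → U) (z : ℝ → Z) (p : ℝ → P)
    (t' : ℝ → ℝ) (u' : ℝ → U) (z' : ℝ → Z) (p' : ℝ → P)
    (hchain : ∀ᵐ s ∂(volume.restrict (Set.Ioo 0 S)),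
      HasDerivAt (fun r => E (t r) (u r) (z r) (p r))
        (⟪DuE (t s) (u s) (z s) (p s), u' s⟫
          + ⟪DzE (t s) (u s) (z s) (p s), z' s⟫
          + ⟪DpE (t s) (u s) (z s) (p s), p' s⟫
          + dtE (t s) (u s) (z s) (p s) * t' s) s)
    (hfin : ∀ᵐ s ∂(volume.restrict (Set.Ioo 0 S)),
      vvM ν R Hh (z s) (t' s) (u' s) (z' s) (p' s)
        (DuE (t s) (u s) (z s) (p s)) (DzE (t s) (u s) (z s) (p s))
        (DpE (t s) (u s) (z s) (p s)) < ⊤) :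
    ∀ᵐ s ∂(volume.restrict (Set.Ioo 0 S)),
      (deriv (fun r => E (t r) (u r) (z r) (p r)) s
          = ⟪DuE (t s) (u s) (z s) (p s), u' s⟫
            + ⟪DzE (t s) (u s) (z s) (p s), z' s⟫
            + ⟪DpE (t s) (u s) (z s) (p s), p' s⟫
            + dtE (t s) (u s) (z s) (p s) * t' s)
      ∧ ENNReal.ofReal (-(⟪DuE (t s) (u s) (z s) (p s), u' s⟫
            + ⟪DzE (t s) (u s) (z s) (p s), z' s⟫
            + ⟪DpE (t s) (u s) (z s) (p s), p' s⟫))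
          ≤ vvM ν R Hh (z s) (t' s) (u' s) (z' s) (p' s)
              (DuE (t s) (u s) (z s) (p s)) (DzE (t s) (u s) (z s) (p s))
              (DpE (t s) (u s) (z s) (p s)) := by
  filter_upwards [hchain, hfin] with s hderiv hfin_s
  exact ⟨hderiv.deriv, ofReal_neg_inner_le_vvM hν hRnn (hHnn _) hfin_s⟩

/-- Chain-rule inequality for the vanishing-viscosity contact potential
(Lemma 6.4 of the paper, abstract Hilbert-space version with
`Q = U × Z × P` standing for `H¹ × H^m × L²`): along any absolutely continuous
parameterized curve `(𝗍,𝗊)` with `ℳ(𝗍,𝗊,𝗍',𝗊') < ∞` a.e., one has (a.e. in `s`)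
`−(d/ds) E(𝗍(s),𝗊(s)) + ∂_t E(𝗍(s),𝗊(s)) 𝗍'(s) = ⟨−D_q E(𝗍(s),𝗊(s)), 𝗊'(s)⟩
 ≤ ℳ(𝗍(s),𝗊(s),𝗍'(s),𝗊'(s))`,
the first equality being the classical chain rule for the energy `E`
(hypothesis `hchain`). -/
theorem chain_rule_inequality_for_contact_potential
    {U Z P : Type*}
    [NormedAddCommGroup U] [InnerProductSpace ℝ U] [CompleteSpace U]
    [NormedAddCommGroup Z] [InnerProductSpace ℝ Z] [CompleteSpace Z]
    [NormedAddCommGroup P] [InnerProductSpace ℝ P] [CompleteSpace P]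
    (ν : ℝ) (hν : 0 < ν)
    (E : ℝ → U → Z → P → ℝ)
    (DuE : ℝ → U → Z → P → U) (DzE : ℝ → U → Z → P → Z)
    (DpE : ℝ → U → Z → P → P) (dtE : ℝ → U → Z → P → ℝ)
    (R : Z → ℝ) (Hh : Z → P → ℝ)
    (hRconv : ConvexOn ℝ Set.univ R) (hRnn : ∀ w, 0 ≤ R w)
    (hRhom : ∀ c : ℝ, 0 ≤ c → ∀ w, R (c • w) = c * R w)
    (hHconv : ∀ z, ConvexOn ℝ Set.univ (Hh z)) (hHnn : ∀ z w, 0 ≤ Hh z w)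
    (hHhom : ∀ z, ∀ c : ℝ, 0 ≤ c → ∀ w, Hh z (c • w) = c * Hh z w)
    (S : ℝ) (hS : 0 < S)
    (t : ℝ → ℝ) (u : ℝ → U) (z : ℝ → Z) (p : ℝ → P)
    (t' : ℝ → ℝ) (u' : ℝ → U) (z' : ℝ → Z) (p' : ℝ → P)
    (hderiv : ∀ᵐ s ∂(volume.restrict (Set.Ioo 0 S)),
      HasDerivAt t (t' s) s ∧ HasDerivAt u (u' s) s ∧ HasDerivAt z (z' s) s ∧
        HasDerivAt p (p' s) s)
    (ht'nn : ∀ᵐ s ∂(volume.restrict (Set.Ioo 0 S)), 0 ≤ t' s)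
    (hchain : ∀ᵐ s ∂(volume.restrict (Set.Ioo 0 S)),
      HasDerivAt (fun r => E (t r) (u r) (z r) (p r))
        (⟪DuE (t s) (u s) (z s) (p s), u' s⟫
          + ⟪DzE (t s) (u s) (z s) (p s), z' s⟫
          + ⟪DpE (t s) (u s) (z s) (p s), p' s⟫
          + dtE (t s) (u s) (z s) (p s) * t' s) s)
    (hfin : ∀ᵐ s ∂(volume.restrict (Set.Ioo 0 S)),
      vvM ν R Hh (z s) (t' s) (u' s) (z' s) (p' s)
        (DuE (t s) (u s) (z s) (p s)) (DzE (t s) (u s) (z s) (p s))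
        (DpE (t s) (u s) (z s) (p s)) < ⊤) :
    ∀ᵐ s ∂(volume.restrict (Set.Ioo 0 S)),
      (deriv (fun r => E (t r) (u r) (z r) (p r)) s
          = ⟪DuE (t s) (u s) (z s) (p s), u' s⟫
            + ⟪DzE (t s) (u s) (z s) (p s), z' s⟫
            + ⟪DpE (t s) (u s) (z s) (p s), p' s⟫
            + dtE (t s) (u s) (z s) (p s) * t' s)
      ∧ ENNReal.ofReal (-(⟪DuE (t s) (u s) (z s) (p s), u' s⟫
            + ⟪DzE (t s) (u s) (z s) (p s), z' s⟫
            + ⟪DpE (t s) (u s) (z s) (p s), p' s⟫))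
          ≤ vvM ν R Hh (z s) (t' s) (u' s) (z' s) (p' s)
              (DuE (t s) (u s) (z s) (p s)) (DzE (t s) (u s) (z s) (p s))
              (DpE (t s) (u s) (z s) (p s)) :=
  chain_rule_inequality_for_contact_potential_general ν hν E DuE DzE DpE dtE R Hh hRnn hHnn S t u z
    p t' u' z' p' hchain hfin
end
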